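/- Let d(n) be a sequence of positive integers with log d(n) = o(log n), and let A = P^{(1)} + ⋯ + P^{(d(n))} be the sum of d(n) independent uniformly random n×n permutation matrices. Fix k ≥ 1. For a tuple i = (i_1,…,i_k) ∈ {1,…,n}^k let A_i = A_{i_1,i_2}·A_{i_2,i_3}⋯A_{i_{k−1},i_k}·A_{i_k,i_1}, let v(i) be the number of distinct values among i_1,…,i_k, and let e(i) be the number of distinct pairs among (i_1,i_2), (i_2,i_3), …, (i_{k−1},i_k), (i_k,i_1). Define R_k = Σ_{i : v(i) = e(i)} A_i·1{A_i > 1} and S_k = Σ_{i : v(i) < e(i)} A_i, where the sums run over i ∈ {1,…,n}^k. Then R_k + S_k converges to 0 in probability as n → ∞. -/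

import Mathlib

open Finset Filter

open scoped Classical

/-- Probability of an event under the uniform distribution on a finite type. -/
noncomputable def pr {α : Type*} [Fintype α] (p : α → Prop) : ℝ :=
  ((Finset.univ.filter fun a => p a).card : ℝ) / Fintype.card α

/-- The permutation matrix of `π`, with natural-number entries: `P i j = 1` iff `π i = j`. -/
def permMatrixN (n : ℕ) (π : Equiv.Perm (Fin n)) : Matrix (Fin n) (Fin n) ℕ :=
  fun i j => if π i = j then 1 else 0

/-- The sum `A = P⁽¹⁾ + ⋯ + P⁽ᵈ⁾` of the permutation matrices of `σ 0, …, σ (d-1)`. -/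
def sumPermN (n d : ℕ) (σ : Fin d → Equiv.Perm (Fin n)) : Matrix (Fin n) (Fin n) ℕ :=
  ∑ q : Fin d, permMatrixN n (σ q)

/-- The weight `A_i = A_{i₁,i₂}·A_{i₂,i₃}⋯A_{i_k,i₁}` of the cyclic path `i`. -/
def pathWeight {n k : ℕ} [NeZero k] (M : Matrix (Fin n) (Fin n) ℕ) (i : Fin k → Fin n) : ℕ :=
  ∏ t : Fin k, M (i t) (i (t + 1))

/-- The number `v(i)` of distinct vertices visited by the tuple `i`. -/
def numVertices {n k : ℕ} (i : Fin k → Fin n) : ℕ :=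
  (Finset.univ.image i).card

/-- The number `e(i)` of distinct edges `(i_t, i_{t+1})` (cyclically) of the tuple `i`. -/
def numEdges {n k : ℕ} [NeZero k] (i : Fin k → Fin n) : ℕ :=
  (Finset.univ.image (fun t : Fin k => (i t, i (t + 1)))).card

/-- `R_k = Σ_{i : v(i) = e(i)} A_i·1{A_i > 1}`. -/
def Rterm (n d k : ℕ) [NeZero k] (σ : Fin d → Equiv.Perm (Fin n)) : ℕ :=
  ∑ i ∈ Finset.univ.filter (fun i : Fin k → Fin n => numVertices i = numEdges i),
    if 1 < pathWeight (sumPermN n d σ) i then pathWeight (sumPermN n d σ) i else 0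

/-- `S_k = Σ_{i : v(i) < e(i)} A_i`. -/
def Sterm (n d k : ℕ) [NeZero k] (σ : Fin d → Equiv.Perm (Fin n)) : ℕ :=
  ∑ i ∈ Finset.univ.filter (fun i : Fin k → Fin n => numVertices i < numEdges i),
    pathWeight (sumPermN n d σ) i

open scoped Nat

/-!
`R_k + S_k` is nonzero only if some closed walk `i` carries more edge multiplicity than it has
vertices, `v(i) < ∑_{e ∈ E(i)} A_e`: `A_i ≠ 0` puts every edge of `E(i)` into `A`, and then
either `v(i) < e(i)` or `A_i > 1` doubles one of them. A fixed set of `m` (colour, edge)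
pairs is realised with probability at most `(2/n)^m`, because a permutation takes `j`
prescribed values with probability `(n-j)!/n! ≤ (2/n)^j`. A union bound over the at most
`(dk)^m` sets of pairs, and then over the at most `k^k n^v` walks with `v` vertices, gives
`P(R_k + S_k ≠ 0) ≤ C_k d^{k+1}/n`, which tends to `0` since `d = n^{o(1)}`.
-/

section UniformProbability

variable {Ω : Type*} [Fintype Ω]

lemma pr_eq_card_div (p : Ω → Prop) [DecidablePred p] :
    pr p = #{ω | p ω} / Fintype.card Ω := by
  simp only [pr]
  congr

lemma pr_nonneg (p : Ω → Prop) : 0 ≤ pr p := by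
  unfold pr; positivity

lemma pr_mono {p q : Ω → Prop} (h : ∀ ω, p ω → q ω) : pr p ≤ pr q := by
  simp only [pr]
  gcongr with ω
  exact h ω

lemma pr_exists_le_sum {ι : Type*} (s : Finset ι) (P : ι → Ω → Prop) :
    pr (fun ω => ∃ i ∈ s, P i ω) ≤ ∑ i ∈ s, pr (P i) := by
  simp only [pr, ← Finset.sum_div]
  gcongr
  calc (#{ω | ∃ i ∈ s, P i ω} : ℝ) = #(s.biUnion fun i => {ω | P i ω}) := by
        congr 2; ext ω; simp
    _ ≤ ∑ i ∈ s, (#{ω | P i ω} : ℝ) := mod_cast Finset.card_biUnion_le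

lemma pr_pi {ι β : Type*} [Fintype ι] [DecidableEq ι] [Fintype β] (P : ι → β → Prop) :
    pr (fun σ : ι → β => ∀ q, P q (σ q)) = ∏ q, pr (P q) := by
  have h : ({σ | ∀ q, P q (σ q)} : Finset (ι → β)) =
      Fintype.piFinset fun q => {b | P q b} := by
    ext σ; simp
  simp only [pr, h, Fintype.card_piFinset, Fintype.card_fun, Finset.prod_div_distrib]
  simp

end UniformProbability

section PermutationConstraints

variable {α : Type*} [Fintype α] [DecidableEq α]

lemma card_perm_fixing_le (S : Finset (α × α)) :
    #{τ : Equiv.Perm α | ∀ e ∈ S, τ e.1 = e.2} ≤ (Fintype.card α - #S)! := by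
  obtain h | ⟨τ₀, hτ₀⟩ := Finset.eq_empty_or_nonempty {τ : Equiv.Perm α | ∀ e ∈ S, τ e.1 = e.2}
  · rw [h]; exact Nat.zero_le _
  replace hτ₀ : ∀ e ∈ S, τ₀ e.1 = e.2 := (Finset.mem_filter.1 hτ₀).2
  set A := S.image Prod.fst
  have hA : #A = #S := Finset.card_image_of_injOn fun e he e' he' h =>
    Prod.ext h (by rw [← hτ₀ e he, ← hτ₀ e' he', h])
  have hembed : #{τ : Equiv.Perm α | ∀ e ∈ S, τ e.1 = e.2} ≤
      #{τ : Equiv.Perm α | ∀ a ∈ A, τ a = a} := by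
    refine Finset.card_le_card_of_injOn (τ₀⁻¹ * ·) ?_ fun τ _ τ' _ h => mul_left_cancel h
    intro τ hτ
    simp only [Finset.coe_filter, Finset.mem_univ, true_and, Set.mem_ofPred_eq] at hτ ⊢
    intro a ha
    obtain ⟨e, he, rfl⟩ := Finset.mem_image.1 ha
    simp [hτ e he, ← hτ₀ e he]
  have hstab : #{τ : Equiv.Perm α | ∀ a ∈ A, τ a = a} = (Fintype.card α - #A)! := by
    calc #{τ : Equiv.Perm α | ∀ a ∈ A, τ a = a}
        = Fintype.card {τ : Equiv.Perm α // ∀ a, ¬a ∈ Aᶜ → τ a = a} := by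
          rw [Fintype.card_subtype]; simp
      _ = (Fintype.card {a // a ∈ Aᶜ})! := by
          rw [← Fintype.card_congr (Equiv.Perm.subtypeEquivSubtypePerm _), Fintype.card_perm]
      _ = (Fintype.card α - #A)! := by simp
  rwa [hstab, hA] at hembed

lemma pow_le_two_pow_mul_descFactorial {n m : ℕ} (h : 2 * m ≤ n) :
    n ^ m ≤ 2 ^ m * n.descFactorial m :=
  calc n ^ m ≤ (2 * (n + 1 - m)) ^ m := Nat.pow_le_pow_left (by omega) m
    _ = 2 ^ m * (n + 1 - m) ^ m := mul_pow ..
    _ ≤ 2 ^ m * n.descFactorial m := Nat.mul_le_mul_left _ (Nat.pow_sub_le_descFactorial n m)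

lemma factorial_sub_div_factorial_le {n m : ℕ} (h : 2 * m ≤ n) :
    ((n - m)! / n ! : ℝ) ≤ (2 / n) ^ m := by
  rcases Nat.eq_zero_or_pos n with rfl | hn
  · obtain rfl : m = 0 := by omega
    simp
  rw [div_pow, div_le_div_iff₀ (by positivity) (by positivity),
    ← Nat.factorial_mul_descFactorial (by omega : m ≤ n)]
  have := pow_le_two_pow_mul_descFactorial h
  calc ((n - m)! * (n : ℝ) ^ m) ≤ (n - m)! * (2 ^ m * n.descFactorial m) := by
        gcongr; exact_mod_cast this
    _ = 2 ^ m * ((n - m)! * n.descFactorial m : ℕ) := by push_cast; ring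

lemma pr_perm_fixing_le (S : Finset (α × α)) (hS : 2 * #S ≤ Fintype.card α) :
    pr (fun τ : Equiv.Perm α => ∀ e ∈ S, τ e.1 = e.2) ≤ (2 / Fintype.card α) ^ #S := by
  calc pr (fun τ : Equiv.Perm α => ∀ e ∈ S, τ e.1 = e.2)
      ≤ ((Fintype.card α - #S)! / (Fintype.card α)! : ℝ) := by
        rw [pr_eq_card_div, Fintype.card_perm]
        gcongr
        exact card_perm_fixing_le S
    _ ≤ (2 / Fintype.card α) ^ #S := factorial_sub_div_factorial_le hS

variable {ι : Type*} [Fintype ι] [DecidableEq ι]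

lemma pr_forall_mem_fixing_le (F : Finset (ι × (α × α)))
    (hF : ∀ q, 2 * #{x ∈ F | x.1 = q} ≤ Fintype.card α) :
    pr (fun σ : ι → Equiv.Perm α => ∀ x ∈ F, σ x.1 x.2.1 = x.2.2) ≤
      (2 / Fintype.card α) ^ #F := by
  set S : ι → Finset (α × α) := fun q => {x ∈ F | x.1 = q}.image Prod.snd
  have hS : ∀ q, #(S q) = #{x ∈ F | x.1 = q} := fun q =>
    Finset.card_image_of_injOn fun x hx y hy h =>
      Prod.ext (((Finset.mem_filter.1 hx).2).trans (Finset.mem_filter.1 hy).2.symm) h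
  have hevent : ∀ σ : ι → Equiv.Perm α,
      (∀ x ∈ F, σ x.1 x.2.1 = x.2.2) ↔ ∀ q, ∀ e ∈ S q, σ q e.1 = e.2 := by
    intro σ
    simp only [S, Finset.mem_image, Finset.mem_filter]
    constructor
    · rintro h q e ⟨x, ⟨hx, rfl⟩, rfl⟩
      exact h x hx
    · intro h x hx
      exact h x.1 x.2 ⟨x, ⟨hx, rfl⟩, rfl⟩
  calc pr (fun σ : ι → Equiv.Perm α => ∀ x ∈ F, σ x.1 x.2.1 = x.2.2)
      = ∏ q, pr (fun τ : Equiv.Perm α => ∀ e ∈ S q, τ e.1 = e.2) := by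
        rw [← pr_pi]
        congr 1
        ext σ
        exact hevent σ
    _ ≤ ∏ q, (2 / Fintype.card α : ℝ) ^ #(S q) :=
        Finset.prod_le_prod (fun q _ => pr_nonneg _)
          fun q _ => pr_perm_fixing_le _ ((hS q).symm ▸ hF q)
    _ = (2 / Fintype.card α) ^ #F := by
        rw [Finset.prod_pow_eq_pow_sum, Finset.card_eq_sum_card_fiberwise (f := Prod.fst)
          (t := Finset.univ) fun _ _ => Finset.mem_coe.2 (Finset.mem_univ _)]
        simp only [hS]

end PermutationConstraints

section EdgeCount

variable {ι α : Type*} [Fintype ι] [DecidableEq α]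

noncomputable def edgeCount (σ : ι → Equiv.Perm α) (E : Finset (α × α)) : ℕ :=
  ∑ e ∈ E, #{q | σ q e.1 = e.2}

lemma edgeCount_eq_card (σ : ι → Equiv.Perm α) (E : Finset (α × α)) :
    edgeCount σ E = #{x ∈ Finset.univ ×ˢ E | σ x.1 x.2.1 = x.2.2} := by
  rw [edgeCount, Finset.card_filter, Finset.sum_product_right]
  exact Finset.sum_congr rfl fun e _ => Finset.card_filter _ _

lemma pr_le_edgeCount_le [DecidableEq ι] [Fintype α] (E : Finset (α × α))
    (hE : 2 * #E ≤ Fintype.card α) (m : ℕ) :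
    pr (fun σ : ι → Equiv.Perm α => m ≤ edgeCount σ E) ≤
      (2 * Fintype.card ι * #E / Fintype.card α) ^ m := by
  set P := (Finset.univ ×ˢ E : Finset (ι × (α × α))).powersetCard m
  have hcover : ∀ σ : ι → Equiv.Perm α, m ≤ edgeCount σ E →
      ∃ F ∈ P, ∀ x ∈ F, σ x.1 x.2.1 = x.2.2 := by
    intro σ hσ
    rw [edgeCount_eq_card] at hσ
    obtain ⟨F, hF, rfl⟩ := Finset.exists_subset_card_eq hσ
    exact ⟨F, Finset.mem_powersetCard.2 ⟨hF.trans (Finset.filter_subset _ _), rfl⟩,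
      fun x hx => (Finset.mem_filter.1 (hF hx)).2⟩
  calc pr (fun σ : ι → Equiv.Perm α => m ≤ edgeCount σ E)
      ≤ ∑ F ∈ P, pr (fun σ : ι → Equiv.Perm α => ∀ x ∈ F, σ x.1 x.2.1 = x.2.2) :=
        (pr_mono hcover).trans (pr_exists_le_sum _ _)
    _ ≤ ∑ _F ∈ P, (2 / Fintype.card α : ℝ) ^ m := by
        refine Finset.sum_le_sum fun F hF => ?_
        obtain ⟨hFE, rfl⟩ := Finset.mem_powersetCard.1 hF
        refine pr_forall_mem_fixing_le F fun q => ?_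
        have hfibre : #{x ∈ F | x.1 = q} ≤ #E := Finset.card_le_card_of_injOn Prod.snd
          (fun _ hx => (Finset.mem_product.1 (hFE (Finset.mem_filter.1 hx).1)).2)
          fun _ hx _ hy h =>
            Prod.ext ((Finset.mem_filter.1 hx).2.trans (Finset.mem_filter.1 hy).2.symm) h
        omega
    _ ≤ ((Fintype.card ι * #E) ^ m : ℕ) * (2 / Fintype.card α : ℝ) ^ m := by
        rw [Finset.sum_const, nsmul_eq_mul, Finset.card_powersetCard, Finset.card_product,
          Finset.card_univ]
        gcongr
        exact Nat.choose_le_pow _ _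
    _ = (2 * Fintype.card ι * #E / Fintype.card α) ^ m := by
        push_cast
        rw [← mul_pow]
        ring

end EdgeCount

section ClosedWalks

variable {n k : ℕ} [NeZero k]

def walkEdges (i : Fin k → Fin n) : Finset (Fin n × Fin n) :=
  Finset.univ.image fun t => (i t, i (t + 1))

lemma numEdges_eq_card_walkEdges (i : Fin k → Fin n) : numEdges i = #(walkEdges i) := rfl

lemma card_walkEdges_le (i : Fin k → Fin n) : #(walkEdges i) ≤ k :=
  Finset.card_image_le.trans (by simp)

lemma one_le_of_mem_walkEdges {M : Matrix (Fin n) (Fin n) ℕ} {i : Fin k → Fin n}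
    (h : pathWeight M i ≠ 0) {e : Fin n × Fin n} (he : e ∈ walkEdges i) : 1 ≤ M e.1 e.2 := by
  obtain ⟨t, -, rfl⟩ := Finset.mem_image.1 he
  exact Nat.one_le_iff_ne_zero.2 (Finset.prod_ne_zero_iff.1 h t (Finset.mem_univ t))

lemma numEdges_le_sum_of_pathWeight_ne_zero {M : Matrix (Fin n) (Fin n) ℕ} {i : Fin k → Fin n}
    (h : pathWeight M i ≠ 0) : numEdges i ≤ ∑ e ∈ walkEdges i, M e.1 e.2 := by
  rw [numEdges_eq_card_walkEdges, Finset.card_eq_sum_ones]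
  exact Finset.sum_le_sum fun e he => one_le_of_mem_walkEdges h he

lemma numEdges_lt_sum_of_one_lt_pathWeight {M : Matrix (Fin n) (Fin n) ℕ} {i : Fin k → Fin n}
    (h : 1 < pathWeight M i) : numEdges i < ∑ e ∈ walkEdges i, M e.1 e.2 := by
  obtain ⟨t, ht⟩ : ∃ t, 1 < M (i t) (i (t + 1)) := by
    by_contra! hle
    exact (Finset.prod_le_one' fun t _ => hle t).not_gt h
  have hmem : (i t, i (t + 1)) ∈ walkEdges i := Finset.mem_image_of_mem _ (Finset.mem_univ t)
  calc numEdges i < ∑ e ∈ walkEdges i, (1 + if e = (i t, i (t + 1)) then 1 else 0) := by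
        rw [Finset.sum_add_distrib, Finset.sum_ite_eq', if_pos hmem]
        simp [numEdges_eq_card_walkEdges]
    _ ≤ ∑ e ∈ walkEdges i, M e.1 e.2 := by
        refine Finset.sum_le_sum fun e he => ?_
        split_ifs with hte
        · subst hte; exact ht
        · simpa using one_le_of_mem_walkEdges (by omega) he

end ClosedWalks

section RandomMultigraph

variable {n d k : ℕ}

lemma sumPermN_apply (σ : Fin d → Equiv.Perm (Fin n)) (a b : Fin n) :
    sumPermN n d σ a b = #{q | σ q a = b} := by
  simp [sumPermN, permMatrixN, Matrix.sum_apply, Finset.sum_boole]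

lemma sum_sumPermN_eq_edgeCount (σ : Fin d → Equiv.Perm (Fin n)) (E : Finset (Fin n × Fin n)) :
    ∑ e ∈ E, sumPermN n d σ e.1 e.2 = edgeCount σ E := by
  simp only [sumPermN_apply, edgeCount]

variable [NeZero k]

lemma exists_numVertices_lt_edgeCount {σ : Fin d → Equiv.Perm (Fin n)}
    (h : Rterm n d k σ + Sterm n d k σ ≠ 0) :
    ∃ i : Fin k → Fin n, numVertices i < edgeCount σ (walkEdges i) := by
  simp only [← sum_sumPermN_eq_edgeCount]
  obtain hR | hS : Rterm n d k σ ≠ 0 ∨ Sterm n d k σ ≠ 0 := by omega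
  · obtain ⟨i, hi, hne⟩ := Finset.exists_ne_zero_of_sum_ne_zero hR
    have hlt : 1 < pathWeight (sumPermN n d σ) i := by
      by_contra hle; exact hne (if_neg hle)
    exact ⟨i, (Finset.mem_filter.1 hi).2 ▸ numEdges_lt_sum_of_one_lt_pathWeight hlt⟩
  · obtain ⟨i, hi, hne⟩ := Finset.exists_ne_zero_of_sum_ne_zero hS
    exact ⟨i, (Finset.mem_filter.1 hi).2.trans_le (numEdges_le_sum_of_pathWeight_ne_zero hne)⟩

lemma pr_numVertices_lt_edgeCount_le (hn : 2 * k ≤ n) (i : Fin k → Fin n) :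
    pr (fun σ : Fin d → Equiv.Perm (Fin n) => numVertices i < edgeCount σ (walkEdges i)) ≤
      (2 * d * k / n : ℝ) ^ (numVertices i + 1) := by
  have hE := card_walkEdges_le i
  simp only [Nat.lt_iff_add_one_le]
  calc pr (fun σ : Fin d → Equiv.Perm (Fin n) => numVertices i + 1 ≤ edgeCount σ (walkEdges i))
      ≤ (2 * Fintype.card (Fin d) * #(walkEdges i) / Fintype.card (Fin n) : ℝ) ^
          (numVertices i + 1) :=
        pr_le_edgeCount_le _ (by simp only [Fintype.card_fin]; omega) _
    _ ≤ (2 * d * k / n : ℝ) ^ (numVertices i + 1) := by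
        simp only [Fintype.card_fin]
        gcongr

end RandomMultigraph

section CountingTuples

variable {n k : ℕ}

lemma card_numVertices_eq_le (m : ℕ) :
    #{i : Fin k → Fin n | numVertices i = m} ≤ n.choose m * m ^ k := by
  have hsub : ({i | numVertices i = m} : Finset (Fin k → Fin n)) ⊆
      (Finset.univ.powersetCard m).biUnion fun S => Fintype.piFinset fun _ => S := by
    intro i hi
    refine Finset.mem_biUnion.2 ⟨Finset.univ.image i, ?_, ?_⟩
    · exact Finset.mem_powersetCard.2 ⟨Finset.subset_univ _, (Finset.mem_filter.1 hi).2⟩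
    · exact Fintype.mem_piFinset.2 fun t => Finset.mem_image_of_mem i (Finset.mem_univ t)
  calc #{i : Fin k → Fin n | numVertices i = m}
      ≤ ∑ S ∈ Finset.univ.powersetCard m, #(Fintype.piFinset fun _ : Fin k => S) :=
        (Finset.card_le_card hsub).trans Finset.card_biUnion_le
    _ = n.choose m * m ^ k := by
        rw [Finset.sum_congr rfl fun S hS => by
          rw [Fintype.card_piFinset_const, (Finset.mem_powersetCard.1 hS).2]]
        simp

lemma sum_range_pow_le_one_add_pow {R : Type*} [CommSemiring R] [PartialOrder R]
    [IsOrderedRing R] {y : R} (hy : 0 ≤ y) (k : ℕ) :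
    ∑ m ∈ Finset.range (k + 1), y ^ m ≤ (1 + y) ^ k := by
  rw [add_comm 1 y, add_pow]
  refine Finset.sum_le_sum fun m hm => (?_ : y ^ m ≤ y ^ m * 1 ^ (k - m) * k.choose m)
  rw [one_pow, mul_one]
  have hchoose : ((1 : ℕ) : R) ≤ k.choose m :=
    Nat.mono_cast (Nat.choose_pos (Nat.lt_succ_iff.1 (Finset.mem_range.1 hm)))
  exact le_mul_of_one_le_right (pow_nonneg hy m) (by simpa using hchoose)

lemma sum_pow_numVertices_le {x : ℝ} (hx : 0 ≤ x) :
    ∑ i : Fin k → Fin n, x ^ numVertices i ≤ k ^ k * (1 + n * x) ^ k := by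
  have hrange : Finset.univ.image (numVertices (n := n) (k := k)) ⊆ Finset.range (k + 1) := by
    intro m hm
    obtain ⟨i, -, rfl⟩ := Finset.mem_image.1 hm
    exact Finset.mem_range.2 (Nat.lt_succ_of_le (Finset.card_image_le.trans (by simp)))
  calc ∑ i : Fin k → Fin n, x ^ numVertices i
      = ∑ m ∈ Finset.univ.image numVertices, #{i : Fin k → Fin n | numVertices i = m} • x ^ m :=
        Finset.sum_comp _ _
    _ ≤ ∑ m ∈ Finset.range (k + 1), #{i : Fin k → Fin n | numVertices i = m} • x ^ m :=
        Finset.sum_le_sum_of_subset_of_nonneg hrange fun _ _ _ => by positivity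
    _ ≤ ∑ m ∈ Finset.range (k + 1), (k : ℝ) ^ k * (n * x) ^ m := by
        refine Finset.sum_le_sum fun m hm => ?_
        have hmk : m ≤ k := Nat.lt_succ_iff.1 (Finset.mem_range.1 hm)
        rw [nsmul_eq_mul, mul_pow, ← mul_assoc]
        gcongr
        calc (#{i : Fin k → Fin n | numVertices i = m} : ℝ) ≤ (n.choose m * m ^ k : ℕ) :=
              mod_cast card_numVertices_eq_le m
          _ ≤ (n ^ m * k ^ k : ℕ) :=
              mod_cast Nat.mul_le_mul (Nat.choose_le_pow n m) (Nat.pow_le_pow_left hmk k)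
          _ = k ^ k * n ^ m := by push_cast; ring
    _ ≤ k ^ k * (1 + n * x) ^ k := by
        rw [← Finset.mul_sum]
        gcongr
        exact sum_range_pow_le_one_add_pow (by positivity) k

end CountingTuples

lemma sum_pow_succ_numVertices_le {n : ℕ} (hn : n ≠ 0) (d k : ℕ) :
    ∑ i : Fin k → Fin n, (2 * d * k / n : ℝ) ^ (numVertices i + 1) ≤
      2 * k ^ (k + 1) * (1 + 2 * k) ^ k * d ^ (k + 1) / n := by
  set x : ℝ := 2 * d * k / n
  have hx : 0 ≤ x := by positivity
  have hnx : n * x = 2 * d * k := by simp only [x]; field_simp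
  have hd : (d : ℝ) * (1 + 2 * d * k) ^ k ≤ (1 + 2 * k) ^ k * d ^ (k + 1) := by
    rcases Nat.eq_zero_or_pos d with rfl | hd
    · simp
    have hd1 : (1 : ℝ) ≤ d := by exact_mod_cast hd
    calc (d : ℝ) * (1 + 2 * d * k) ^ k ≤ d * (d * (1 + 2 * k)) ^ k := by
          gcongr; nlinarith
      _ = (1 + 2 * k) ^ k * d ^ (k + 1) := by rw [mul_pow]; ring
  calc ∑ i : Fin k → Fin n, x ^ (numVertices i + 1)
      = x * ∑ i : Fin k → Fin n, x ^ numVertices i := by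
        simp only [pow_succ, Finset.mul_sum, mul_comm]
    _ ≤ x * (k ^ k * (1 + n * x) ^ k) := by gcongr; exact sum_pow_numVertices_le hx
    _ = 2 * k ^ (k + 1) * (d * (1 + 2 * d * k) ^ k) / n := by
        rw [hnx]; simp only [x]; ring
    _ ≤ 2 * k ^ (k + 1) * (1 + 2 * k) ^ k * d ^ (k + 1) / n := by
        rw [mul_assoc _ _ ((d : ℝ) ^ (k + 1))]
        gcongr

lemma tendsto_pow_div_of_tendsto_log_div_log {d : ℕ → ℕ}
    (h : Tendsto (fun n => Real.log (d n) / Real.log n) atTop (nhds 0)) (p : ℕ) :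
    Tendsto (fun n : ℕ => (d n : ℝ) ^ p / n) atTop (nhds 0) := by
  have hexp : Tendsto (fun n : ℕ =>
      Real.exp (Real.log n * (p * (Real.log (d n) / Real.log n) - 1))) atTop (nhds 0) :=
    Real.tendsto_exp_atBot.comp <|
      (Real.tendsto_log_atTop.comp tendsto_natCast_atTop_atTop).atTop_mul_neg
        (by norm_num : (-1 : ℝ) < 0) (by simpa using (h.const_mul (p : ℝ)).sub_const 1)
  refine squeeze_zero' (Eventually.of_forall fun n => by positivity) ?_ hexp
  filter_upwards [eventually_gt_atTop 1] with n hn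
  have hn' : (0 : ℝ) < n := by positivity
  have hlog : Real.log n ≠ 0 := (Real.log_pos (by exact_mod_cast hn)).ne'
  have hpow : (d n : ℝ) ^ p ≤ Real.exp (p * Real.log (d n)) := by
    rcases Nat.eq_zero_or_pos (d n) with h0 | hpos
    · rw [h0, Nat.cast_zero, Real.log_zero, mul_zero, Real.exp_zero]
      exact pow_le_one₀ le_rfl zero_le_one
    · rw [← Real.log_pow, Real.exp_log (by positivity)]
  calc (d n : ℝ) ^ p / n ≤ Real.exp (p * Real.log (d n)) / Real.exp (Real.log n) := by
        rw [Real.exp_log hn']; gcongr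
    _ = Real.exp (Real.log n * (p * (Real.log (d n) / Real.log n) - 1)) := by
        rw [← Real.exp_sub]; congr 1; field_simp

theorem error_terms_to_zero_in_probability_general (d : ℕ → ℕ)
    (hdlog : Tendsto (fun n => Real.log (d n) / Real.log n) atTop (nhds 0))
    (k : ℕ) [NeZero k] :
    ∀ ε : ℝ, 0 < ε →
      Tendsto
        (fun n : ℕ =>
          pr (fun σ : Fin (d n) → Equiv.Perm (Fin n) =>
            ε ≤ ((Rterm n (d n) k σ + Sterm n (d n) k σ : ℕ) : ℝ)))
        atTop (nhds 0) := by
  intro ε hε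
  set C : ℝ := 2 * k ^ (k + 1) * (1 + 2 * k) ^ k
  have hlim : Tendsto (fun n : ℕ => C * d n ^ (k + 1) / n) atTop (nhds 0) := by
    simpa [mul_div_assoc] using (tendsto_pow_div_of_tendsto_log_div_log hdlog (k + 1)).const_mul C
  refine squeeze_zero' (Eventually.of_forall fun n => pr_nonneg _) ?_ hlim
  filter_upwards [eventually_ge_atTop (2 * k), eventually_ne_atTop 0] with n hn hn0
  calc pr (fun σ : Fin (d n) → Equiv.Perm (Fin n) =>
        ε ≤ ((Rterm n (d n) k σ + Sterm n (d n) k σ : ℕ) : ℝ))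
      ≤ pr (fun σ : Fin (d n) → Equiv.Perm (Fin n) =>
          ∃ i ∈ Finset.univ, numVertices i < edgeCount σ (walkEdges (k := k) i)) := by
        refine pr_mono fun σ hσ => ?_
        have hne : Rterm n (d n) k σ + Sterm n (d n) k σ ≠ 0 := by
          intro h0; rw [h0, Nat.cast_zero] at hσ; linarith
        obtain ⟨i, hi⟩ := exists_numVertices_lt_edgeCount hne
        exact ⟨i, Finset.mem_univ i, hi⟩
    _ ≤ ∑ i : Fin k → Fin n, (2 * d n * k / n : ℝ) ^ (numVertices i + 1) :=
        (pr_exists_le_sum _ _).trans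
          (Finset.sum_le_sum fun i _ => pr_numVertices_lt_edgeCount_le hn i)
    _ ≤ C * d n ^ (k + 1) / n := sum_pow_succ_numVertices_le hn0 (d n) k

/-- For `d(n)` with `log d(n) = o(log n)` and fixed `k ≥ 1`, the error terms `R_k + S_k`
in the trace expansion converge to `0` in probability as `n → ∞`. -/
theorem error_terms_to_zero_in_probability (d : ℕ → ℕ) (hd1 : ∀ n, 1 ≤ d n)
    (hdlog : Tendsto (fun n => Real.log (d n) / Real.log n) atTop (nhds 0))
    (k : ℕ) [NeZero k] :
    ∀ ε : ℝ, 0 < ε →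
      Tendsto
        (fun n : ℕ =>
          pr (fun σ : Fin (d n) → Equiv.Perm (Fin n) =>
            ε ≤ ((Rterm n (d n) k σ + Sterm n (d n) k σ : ℕ) : ℝ)))
        atTop (nhds 0) :=
  error_terms_to_zero_in_probability_general d hdlog k
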